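/- Let p be a prime with p ≡ 1 (mod 8). Then at most two of the three candidates (p+3)/4, (p+1)/2, (3p+1)/4 are fixed points of the self-power map of multiplicative order (p-1)/4; i.e., F_{(p-1)/4}(p) ≤ 2. Specifically, (p+1)/2 and (3p+1)/4 cannot both have order (p-1)/4. -/

import Mathlib

/-!
If `x ∈ [1, p - 1]` has order `d = (p - 1) / 4` and `x ^ x = x`, then `x ^ (x - 1) = 1`, so
`d ∣ x - 1` and `x ∈ {d + 1, 2d + 1, 3d + 1}` (`x = 1` has order `1`). The last two candidates are
`(p + 1) / 2 ≡ 2⁻¹` and `(3p + 1) / 4 ≡ 4⁻¹ = (2⁻¹) ^ 2`, and squaring halves an even order,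
so these two cannot both have order `d`.
-/

open Finset

theorem orderOf_dvd_pred_of_pow_eq_self {M : Type*} [MonoidWithZero M] [IsRightCancelMulZero M]
    {a : M} (ha : a ≠ 0) {n : ℕ} (hn : 0 < n) (h : a ^ n = a) : orderOf a ∣ n - 1 := by
  apply orderOf_dvd_of_pow_eq_one
  apply mul_right_cancel₀ ha
  rw [← pow_succ, Nat.sub_add_cancel hn, h, one_mul]

theorem orderOf_sq_ne {G : Type*} [Monoid G] {g : G} (hpos : 0 < orderOf g)
    (heven : Even (orderOf g)) : orderOf (g ^ 2) ≠ orderOf g := by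
  rw [orderOf_pow' g two_ne_zero, Nat.gcd_eq_right (even_iff_two_dvd.mp heven)]
  omega

theorem orderOf_inv_four_ne {K : Type*} [DivisionRing K] {d : ℕ} (hd : 0 < d) (heven : Even d)
    (h : orderOf (2 : K)⁻¹ = d) : orderOf (4 : K)⁻¹ ≠ d := by
  have hsq : (4 : K)⁻¹ = ((2 : K)⁻¹) ^ 2 := by rw [inv_pow]; norm_num
  rw [hsq, ← h]
  exact orderOf_sq_ne (h ▸ hd) (h ▸ heven)

theorem ZMod.natCast_eq_inv_of_mul_eq {n k m a : ℕ} (h : k * m = a * n + 1) :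
    (m : ZMod n) = (k : ZMod n)⁻¹ := by
  refine (ZMod.inv_eq_of_mul_eq_one n _ _ ?_).symm
  rw [← Nat.cast_mul, h]
  simp

theorem Finset.card_le_two_of_subset_triple {α : Type*} [DecidableEq α] {s : Finset α}
    {a b c : α} (h : s ⊆ {a, b, c}) (hbc : ¬(b ∈ s ∧ c ∈ s)) : #s ≤ 2 := by
  have hs : s ⊆ {a, c} ∨ s ⊆ {a, b} := by
    by_contra! hne
    simp only [not_subset, mem_insert, mem_singleton] at hne
    grind
  rcases hs with hs | hs <;> exact (card_le_card hs).trans card_le_two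

/-- The set whose cardinality is `F_d(p)`. -/
noncomputable def selfPowerFixedPoints (p d : ℕ) : Finset ℕ :=
  (Icc 1 (p - 1)).filter fun x : ℕ => orderOf (x : ZMod p) = d ∧ (x : ZMod p) ^ x = (x : ZMod p)

theorem selfPowerFixedPoints_subset {p d : ℕ} [Fact p.Prime] (hd : p - 1 = 4 * d)
    (hd1 : d ≠ 1) : selfPowerFixedPoints p d ⊆ {d + 1, 2 * d + 1, 3 * d + 1} := by
  intro x hx
  obtain ⟨⟨hx1, hxp⟩, hord, hfix⟩ : (1 ≤ x ∧ x ≤ p - 1) ∧ _ := by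
    simpa only [selfPowerFixedPoints, mem_filter, mem_Icc] using hx
  have hx0 : (x : ZMod p) ≠ 0 := by
    rw [Ne, ZMod.natCast_eq_zero_iff]
    exact fun hdvd => by have := Nat.le_of_dvd (by omega) hdvd; omega
  obtain ⟨k, hk⟩ : d ∣ x - 1 := hord ▸ orderOf_dvd_pred_of_pow_eq_self hx0 hx1 hfix
  have hk4 : k < 4 := Nat.lt_of_mul_lt_mul_left (a := d) (by omega)
  have hk0 : k ≠ 0 := by
    rintro rfl
    obtain rfl : x = 1 := by omega
    exact hd1 (by simpa using hord.symm)
  simp only [mem_insert, mem_singleton]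
  interval_cases k <;> omega

theorem fixed_points_order_quarter_mod_eight_one (p : ℕ) (hp : p.Prime)
    (h8 : p % 8 = 1) :
    ((Finset.Icc 1 (p - 1)).filter (fun x : ℕ => orderOf (x : ZMod p) = (p - 1) / 4 ∧
        (x : ZMod p) ^ x = (x : ZMod p))).card ≤ 2 ∧
    ¬ (orderOf ((((p + 1) / 2 : ℕ)) : ZMod p) = (p - 1) / 4 ∧
        orderOf ((((3 * p + 1) / 4 : ℕ)) : ZMod p) = (p - 1) / 4) := by
  have := Fact.mk hp
  set d := (p - 1) / 4
  have hd : p - 1 = 4 * d := by omega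
  have hd0 : 0 < d := by have := hp.two_le; omega
  have heven : Even d := even_iff_two_dvd.mpr (by omega)
  have not_both : ¬(orderOf (((p + 1) / 2 : ℕ) : ZMod p) = d ∧
      orderOf (((3 * p + 1) / 4 : ℕ) : ZMod p) = d) := by
    rintro ⟨h2, h4⟩
    rw [ZMod.natCast_eq_inv_of_mul_eq (k := 2) (a := 1) (by omega)] at h2
    rw [ZMod.natCast_eq_inv_of_mul_eq (k := 4) (a := 3) (by omega)] at h4
    exact orderOf_inv_four_ne hd0 heven (mod_cast h2) (mod_cast h4)
  refine ⟨?_, not_both⟩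
  refine card_le_two_of_subset_triple (selfPowerFixedPoints_subset hd (by omega)) ?_
  rintro ⟨h2, h4⟩
  have e2 : (p + 1) / 2 = 2 * d + 1 := by omega
  have e4 : (3 * p + 1) / 4 = 3 * d + 1 := by omega
  rw [e2, e4] at not_both
  exact not_both ⟨(mem_filter.mp h2).2.1, (mem_filter.mp h4).2.1⟩
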